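/- arXiv:1501.04368 — 5 statements merged into one kernel-verified Lean document; each statement's English description precedes it below -/
import Mathlib

section
/- Let h : Finset P → ℝ and δ(A) = ∑_{B ⊆ A} (-1)^{|A|-|B|} h(B). Suppose A, B ⊆ P are disjoint and nonempty, and h is additive across A and B in the sense that h(a ∪ b) = h(a) + h(b) for all nonempty a ⊆ A, b ⊆ B. Then δ(C) = 0 for every C ⊆ A ∪ B that contains at least one element of A and at least one element of B. -/
lemma alt_sum_zero {α : Type*} [DecidableEq α] {x : Finset α} (hx : x.Nonempty) :
    ∑ m ∈ x.powerset, (-1 : ℝ) ^ (x.card - m.card) = 0 := by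
  have hz : ∑ m ∈ x.powerset, (-1 : ℝ) ^ m.card = 0 := by
    have hI := Finset.sum_powerset_neg_one_pow_card_of_nonempty hx
    have := congrArg (Int.cast : ℤ → ℝ) hI
    push_cast at this
    exact this
  calc ∑ m ∈ x.powerset, (-1 : ℝ) ^ (x.card - m.card)
      = ∑ m ∈ x.powerset, (-1 : ℝ) ^ x.card * (-1 : ℝ) ^ m.card := by
        refine Finset.sum_congr rfl fun m hm => ?_
        have hle : m.card ≤ x.card := Finset.card_le_card (Finset.mem_powerset.mp hm)
        rw [← pow_add, show x.card + m.card = (x.card - m.card) + 2 * m.card by omega,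
          pow_add, pow_mul]
        norm_num
    _ = 0 := by rw [← Finset.mul_sum, hz, mul_zero]

theorem stmt_1 {α : Type*} [DecidableEq α] (P : Finset α)
    (h : Finset α → ℝ) (h0 : h ∅ = 0)
    (δ : Finset α → ℝ)
    (hδ : ∀ A : Finset α,
      δ A = ∑ B ∈ A.powerset, (-1 : ℝ) ^ (A.card - B.card) * h B)
    (A B : Finset α) (hA : A ⊆ P) (hB : B ⊆ P)
    (hdisj : Disjoint A B) (hAne : A.Nonempty) (hBne : B.Nonempty)
    (hadd : ∀ a ⊆ A, ∀ b ⊆ B, a.Nonempty → b.Nonempty → h (a ∪ b) = h a + h b) :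
    ∀ C ⊆ A ∪ B, (C ∩ A).Nonempty → (C ∩ B).Nonempty → δ C = 0 := by
  intro C hC h1 h2
  set C1 := C ∩ A with hC1
  set C2 := C ∩ B with hC2
  have hd : Disjoint C1 C2 :=
    hdisj.mono Finset.inter_subset_right Finset.inter_subset_right
  have hCeq : C = C1 ∪ C2 := by
    rw [hC1, hC2, ← Finset.inter_union_distrib_left]
    exact (Finset.inter_eq_left.mpr hC).symm
  have hadd' : ∀ p ⊆ C1, ∀ q ⊆ C2, h (p ∪ q) = h p + h q := by
    intro p hp q hq
    rcases p.eq_empty_or_nonempty with rfl | hpne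
    · simp [h0]
    rcases q.eq_empty_or_nonempty with rfl | hqne
    · simp [h0]
    exact hadd p (hp.trans Finset.inter_subset_right) q
      (hq.trans Finset.inter_subset_right) hpne hqne
  have hcard : (C1 ∪ C2).card = C1.card + C2.card :=
    Finset.card_union_of_disjoint hd
  rw [hδ, hCeq]
  have key : ∑ S ∈ (C1 ∪ C2).powerset, (-1 : ℝ) ^ ((C1 ∪ C2).card - S.card) * h S
      = ∑ p ∈ C1.powerset ×ˢ C2.powerset,
          (-1 : ℝ) ^ ((C1 ∪ C2).card - (p.1 ∪ p.2).card) * h (p.1 ∪ p.2) := by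
    refine Finset.sum_nbij' (fun S => (S ∩ C1, S ∩ C2)) (fun p => p.1 ∪ p.2) ?_ ?_ ?_ ?_ ?_
    · intro S hS
      exact Finset.mem_product.mpr ⟨Finset.mem_powerset.mpr Finset.inter_subset_right,
        Finset.mem_powerset.mpr Finset.inter_subset_right⟩
    · intro p hp
      obtain ⟨hp1, hp2⟩ := Finset.mem_product.mp hp
      exact Finset.mem_powerset.mpr
        (Finset.union_subset_union (Finset.mem_powerset.mp hp1) (Finset.mem_powerset.mp hp2))
    · intro S hS
      have hS' := Finset.mem_powerset.mp hS
      show S ∩ C1 ∪ S ∩ C2 = S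
      rw [← Finset.inter_union_distrib_left, Finset.inter_eq_left.mpr hS']
    · intro p hp
      obtain ⟨hp1, hp2⟩ := Finset.mem_product.mp hp
      rw [Finset.mem_powerset] at hp1 hp2
      show ((p.1 ∪ p.2) ∩ C1, (p.1 ∪ p.2) ∩ C2) = p
      have e1 : (p.1 ∪ p.2) ∩ C1 = p.1 := by
        rw [Finset.union_inter_distrib_right, Finset.inter_eq_left.mpr hp1,
          Finset.disjoint_iff_inter_eq_empty.mp (hd.symm.mono_left hp2), Finset.union_empty]
      have e2 : (p.1 ∪ p.2) ∩ C2 = p.2 := by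
        rw [Finset.union_inter_distrib_right, Finset.inter_eq_left.mpr hp2,
          Finset.disjoint_iff_inter_eq_empty.mp (hd.mono_left hp1), Finset.empty_union]
      rw [e1, e2]
    · intro S hS
      have hS' := Finset.mem_powerset.mp hS
      have hSu : S ∩ C1 ∪ S ∩ C2 = S := by
        rw [← Finset.inter_union_distrib_left, Finset.inter_eq_left.mpr hS']
      show _ = (-1 : ℝ) ^ ((C1 ∪ C2).card - (S ∩ C1 ∪ S ∩ C2).card) * h (S ∩ C1 ∪ S ∩ C2)
      rw [hSu]
  rw [key, Finset.sum_product]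
  set K : ℝ := ∑ q ∈ C2.powerset, (-1 : ℝ) ^ (C2.card - q.card) * h q with hK
  have inner : ∀ p ∈ C1.powerset,
      ∑ q ∈ C2.powerset, (-1 : ℝ) ^ ((C1 ∪ C2).card - (p ∪ q).card) * h (p ∪ q)
        = (-1 : ℝ) ^ (C1.card - p.card) * K := by
    intro p hp
    have hp' := Finset.mem_powerset.mp hp
    have step : ∀ q ∈ C2.powerset,
        (-1 : ℝ) ^ ((C1 ∪ C2).card - (p ∪ q).card) * h (p ∪ q)
          = (-1 : ℝ) ^ (C1.card - p.card) *
              ((-1 : ℝ) ^ (C2.card - q.card) * (h p + h q)) := by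
      intro q hq
      have hq' := Finset.mem_powerset.mp hq
      have hcu : (p ∪ q).card = p.card + q.card :=
        Finset.card_union_of_disjoint (hd.mono hp' hq')
      have hle1 : p.card ≤ C1.card := Finset.card_le_card hp'
      have hle2 : q.card ≤ C2.card := Finset.card_le_card hq'
      have hexp : (C1 ∪ C2).card - (p ∪ q).card
          = (C1.card - p.card) + (C2.card - q.card) := by
        rw [hcard, hcu]; omega
      rw [hexp, pow_add, hadd' p hp' q hq', mul_assoc]
    rw [Finset.sum_congr rfl step, ← Finset.mul_sum]
    congr 1
    have : ∑ q ∈ C2.powerset, (-1 : ℝ) ^ (C2.card - q.card) * (h p + h q)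
        = h p * (∑ q ∈ C2.powerset, (-1 : ℝ) ^ (C2.card - q.card)) + K := by
      rw [Finset.mul_sum, ← Finset.sum_add_distrib]
      exact Finset.sum_congr rfl fun q _ => by ring
    rw [this, alt_sum_zero h2, mul_zero, zero_add]
  rw [Finset.sum_congr rfl inner, ← Finset.sum_mul, alt_sum_zero h1, zero_mul]
end

section
/- Conversely, let h : Finset P → ℝ with h(∅) = 0 and δ its forward difference. If A, B ⊆ P are disjoint and δ(C) = 0 for every C ⊆ A ∪ B meeting both A and B, then h(a ∪ b) = h(a) + h(b) for all a ⊆ A and b ⊆ B. -/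
open Finset

lemma my_inv {α : Type*} [DecidableEq α] (h : Finset α → ℝ) (S : Finset α) :
    ∑ C ∈ S.powerset, ∑ D ∈ C.powerset, (-1:ℝ)^(C.card - D.card) * h D = h S := by
  rw [Finset.sum_comm' (t' := S.powerset) (s' := fun D => S.powerset.filter (fun C => D ⊆ C))]
  · have key : ∀ D ∈ S.powerset,
        ∑ C ∈ S.powerset.filter (fun C => D ⊆ C), (-1:ℝ)^(C.card - D.card) * h D
        = (if D = S then 1 else 0) * h D := by
      intro D hD
      rw [mem_powerset] at hD
      rw [← Finset.sum_mul]
      congr 1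
      rw [Finset.sum_bij' (t := (S \ D).powerset) (i := fun C _ => C \ D)
        (j := fun E _ => D ∪ E) (g := fun E => (-1:ℝ)^E.card)]
      · have hz := congrArg (Int.cast : ℤ → ℝ) (Finset.sum_powerset_neg_one_pow_card (x := S \ D))
        push_cast at hz
        rw [hz]
        simp only [Finset.sdiff_eq_empty_iff_subset]
        by_cases hc : D = S
        · simp [hc]
        · rw [if_neg hc, if_neg (fun hs => hc (Finset.Subset.antisymm hD hs))]
      · intro C hC
        simp only [mem_filter, mem_powerset] at hC ⊢
        exact sdiff_subset_sdiff hC.1 (Finset.Subset.refl _)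
      · intro E hE
        simp only [mem_filter, mem_powerset] at hE ⊢
        exact ⟨union_subset hD (hE.trans (sdiff_subset)), subset_union_left⟩
      · intro C hC
        simp only [mem_filter, mem_powerset] at hC
        rw [Finset.union_sdiff_of_subset hC.2]
      · intro E hE
        simp only [mem_powerset] at hE
        rw [Finset.union_sdiff_cancel_left]
        exact (sdiff_disjoint.mono_left hE).symm
      · intro C hC
        simp only [mem_filter, mem_powerset] at hC
        rw [card_sdiff_of_subset hC.2]
    rw [Finset.sum_congr rfl key]
    simp
  · intro C D
    simp only [mem_powerset, mem_filter]
    constructor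
    · rintro ⟨h1, h2⟩; exact ⟨⟨h1, h2⟩, h2.trans h1⟩
    · rintro ⟨⟨h1, h2⟩, h3⟩; exact ⟨h1, h2⟩

theorem stmt_2 {α : Type*} [DecidableEq α] (P : Finset α)
    (h : Finset α → ℝ) (h0 : h ∅ = 0)
    (δ : Finset α → ℝ)
    (hδ : ∀ A : Finset α,
      δ A = ∑ B ∈ A.powerset, (-1 : ℝ) ^ (A.card - B.card) * h B)
    (A B : Finset α) (hA : A ⊆ P) (hB : B ⊆ P)
    (hdisj : Disjoint A B)
    (hzero : ∀ C ⊆ A ∪ B, (C ∩ A).Nonempty → (C ∩ B).Nonempty → δ C = 0) :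
    ∀ a ⊆ A, ∀ b ⊆ B, h (a ∪ b) = h a + h b := by
  have hinv : ∀ S : Finset α, h S = ∑ C ∈ S.powerset, δ C := by
    intro S
    rw [← my_inv h S]
    exact (Finset.sum_congr rfl fun C (_ : C ∈ S.powerset) => (hδ C).symm)
  have hδ0 : δ ∅ = 0 := by
    rw [hδ]; simp [h0]
  intro a ha b hb
  have hab : a ∩ b = ∅ := by
    rw [← Finset.disjoint_iff_inter_eq_empty]
    exact hdisj.mono ha hb
  rw [hinv (a ∪ b), hinv a, hinv b]
  rw [← Finset.sum_filter_add_sum_filter_not ((a ∪ b).powerset) (fun C => C ⊆ a ∨ C ⊆ b)]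
  have hrest : ∑ C ∈ ((a ∪ b).powerset).filter (fun C => ¬(C ⊆ a ∨ C ⊆ b)), δ C = 0 := by
    apply Finset.sum_eq_zero
    intro C hC
    simp only [mem_filter, mem_powerset, not_or] at hC
    obtain ⟨hCab, hCa, hCb⟩ := hC
    apply hzero C (hCab.trans (Finset.union_subset_union ha hb))
    · obtain ⟨x, hxC, hxb⟩ := Finset.not_subset.1 hCb
      have hxa : x ∈ a := by
        rcases Finset.mem_union.1 (hCab hxC) with h' | h'
        · exact h'
        · exact absurd h' hxb
      exact ⟨x, Finset.mem_inter.2 ⟨hxC, ha hxa⟩⟩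
    · obtain ⟨x, hxC, hxa⟩ := Finset.not_subset.1 hCa
      have hxb : x ∈ b := by
        rcases Finset.mem_union.1 (hCab hxC) with h' | h'
        · exact absurd h' hxa
        · exact h'
      exact ⟨x, Finset.mem_inter.2 ⟨hxC, hb hxb⟩⟩
  rw [hrest, add_zero]
  have hfilt : ((a ∪ b).powerset).filter (fun C => C ⊆ a ∨ C ⊆ b)
      = a.powerset ∪ b.powerset := by
    ext C
    simp only [mem_filter, mem_powerset, mem_union, mem_powerset]
    constructor
    · rintro ⟨_, h'⟩; exact h'
    · rintro (h' | h')
      · exact ⟨h'.trans subset_union_left, Or.inl h'⟩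
      · exact ⟨h'.trans subset_union_right, Or.inr h'⟩
  rw [hfilt]
  have := Finset.sum_union_inter (s₁ := a.powerset) (s₂ := b.powerset) (f := δ)
  have hint : a.powerset ∩ b.powerset = {∅} := by
    ext C
    simp only [Finset.mem_inter, Finset.mem_powerset, Finset.mem_singleton,
      ← Finset.subset_inter_iff, hab, Finset.subset_empty]
  rw [hint] at this
  simp only [Finset.powerset_empty, Finset.sum_singleton, hδ0, add_zero] at this
  exact this
end

section
/- With conditional forward differences defined as above, for disjoint A, B, C ⊆ P: δ(A | B ∪ C) = ∑_{D ⊆ C} δ(A ∪ D | B). -/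
private lemma key_lemma {α : Type*} [DecidableEq α]
    (h : Finset α → ℝ) (δc : Finset α → Finset α → ℝ)
    (hδc : ∀ A B : Finset α,
      δc A B = ∑ E ∈ A.powerset, (-1 : ℝ) ^ (A.card - E.card) * h (E ∪ B))
    (A B : Finset α) (c : α) (hcA : c ∉ A) :
    δc A (insert c B) = δc (insert c A) B + δc A B := by
  rw [hδc, hδc, hδc, Finset.powerset_insert]
  have hdisj : Disjoint A.powerset (A.powerset.image (insert c)) := by
    rw [Finset.disjoint_left]
    intro E hE hE'
    simp only [Finset.mem_image, Finset.mem_powerset] at hE hE'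
    obtain ⟨F, hF, rfl⟩ := hE'
    exact hcA (hE (Finset.mem_insert_self c F))
  rw [Finset.sum_union hdisj]
  have hinj : ∀ x ∈ A.powerset, ∀ y ∈ A.powerset, insert c x = insert c y → x = y := by
    intro x hx y hy hxy
    simp only [Finset.mem_powerset] at hx hy
    have hcx : c ∉ x := fun hc => hcA (hx hc)
    have hcy : c ∉ y := fun hc => hcA (hy hc)
    rw [← Finset.erase_insert hcx, ← Finset.erase_insert hcy, hxy]
  rw [Finset.sum_image hinj]
  have S1 : ∀ E ∈ A.powerset,
      (-1 : ℝ) ^ ((insert c A).card - (insert c E).card) * h (insert c E ∪ B)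
        = (-1 : ℝ) ^ (A.card - E.card) * h (E ∪ insert c B) := by
    intro E hE
    simp only [Finset.mem_powerset] at hE
    have hcE : c ∉ E := fun hc => hcA (hE hc)
    rw [Finset.card_insert_of_notMem hcA, Finset.card_insert_of_notMem hcE,
      Nat.add_sub_add_right, Finset.insert_union, Finset.union_insert]
  have S2 : ∀ E ∈ A.powerset,
      (-1 : ℝ) ^ ((insert c A).card - E.card) * h (E ∪ B)
        = -((-1 : ℝ) ^ (A.card - E.card) * h (E ∪ B)) := by
    intro E hE
    simp only [Finset.mem_powerset] at hE
    have hle : E.card ≤ A.card := Finset.card_le_card hE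
    have : (insert c A).card - E.card = (A.card - E.card) + 1 := by
      rw [Finset.card_insert_of_notMem hcA]; omega
    rw [this, pow_succ]
    ring
  rw [Finset.sum_congr rfl S1, Finset.sum_congr rfl S2, Finset.sum_neg_distrib]
  ring

private lemma main_aux {α : Type*} [DecidableEq α]
    (h : Finset α → ℝ) (δc : Finset α → Finset α → ℝ)
    (hδc : ∀ A B : Finset α,
      δc A B = ∑ E ∈ A.powerset, (-1 : ℝ) ^ (A.card - E.card) * h (E ∪ B))
    (C : Finset α) : ∀ A B : Finset α, Disjoint A C → Disjoint B C →
      δc A (B ∪ C) = ∑ D ∈ C.powerset, δc (A ∪ D) B := by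
  induction C using Finset.induction_on with
  | empty =>
    intro A B _ _
    simp
  | @insert c C hc ih =>
    intro A B hAC hBC
    have hcA : c ∉ A := fun hx => (Finset.disjoint_left.mp hAC) hx (Finset.mem_insert_self c C)
    have hcB : c ∉ B := fun hx => (Finset.disjoint_left.mp hBC) hx (Finset.mem_insert_self c C)
    have hAC' : Disjoint A C := hAC.mono_right (Finset.subset_insert c C)
    have hBC' : Disjoint (insert c B) C := by
      rw [Finset.insert_eq]
      exact Finset.disjoint_union_left.mpr
        ⟨Finset.disjoint_singleton_left.mpr hc, hBC.mono_right (Finset.subset_insert c C)⟩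
    have hBU : B ∪ insert c C = (insert c B) ∪ C := by
      ext x; simp [Finset.mem_insert, Finset.mem_union]
    rw [hBU, ih A (insert c B) hAC' hBC']
    have step : ∀ D ∈ C.powerset,
        δc (A ∪ D) (insert c B) = δc (insert c (A ∪ D)) B + δc (A ∪ D) B := by
      intro D hD
      simp only [Finset.mem_powerset] at hD
      have hcD : c ∉ D := fun hx => hc (hD hx)
      exact key_lemma h δc hδc (A ∪ D) B c (by simp [hcA, hcD])
    rw [Finset.sum_congr rfl step, Finset.sum_add_distrib, Finset.powerset_insert,
      Finset.sum_union]
    · have hinj : ∀ x ∈ C.powerset, ∀ y ∈ C.powerset, insert c x = insert c y → x = y := by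
        intro x hx y hy hxy
        simp only [Finset.mem_powerset] at hx hy
        have hcx : c ∉ x := fun hh => hc (hx hh)
        have hcy : c ∉ y := fun hh => hc (hy hh)
        rw [← Finset.erase_insert hcx, ← Finset.erase_insert hcy, hxy]
      rw [Finset.sum_image hinj]
      have : ∀ D ∈ C.powerset, δc (A ∪ insert c D) B = δc (insert c (A ∪ D)) B := by
        intro D _
        rw [Finset.union_insert]
      rw [Finset.sum_congr rfl this]
      ring
    · rw [Finset.disjoint_left]
      intro E hE hE'
      simp only [Finset.mem_image, Finset.mem_powerset] at hE hE'
      obtain ⟨F, hF, rfl⟩ := hE'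
      exact hc (hE (Finset.mem_insert_self c F))

theorem stmt_6 {α : Type*} [DecidableEq α] (P : Finset α)
    (h : Finset α → ℝ) (h0 : h ∅ = 0)
    (δc : Finset α → Finset α → ℝ)
    (hδc : ∀ A B : Finset α,
      δc A B = ∑ E ∈ A.powerset, (-1 : ℝ) ^ (A.card - E.card) * h (E ∪ B))
    (A B C : Finset α) (hA : A ⊆ P) (hB : B ⊆ P) (hC : C ⊆ P)
    (hAB : Disjoint A B) (hAC : Disjoint A C) (hBC : Disjoint B C)
    (hAne : A.Nonempty) :
    δc A (B ∪ C) = ∑ D ∈ C.powerset, δc (A ∪ D) B := by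
  exact main_aux h δc hδc C A B hAC hBC
end

section
/- Explained information decomposition: let h be a set function on subsets of P with h(∅)=0, δ its forward differences, and for disjoint sets define I(K ⊥ A) = h(K) + h(A) - h(K ∪ A) for a singleton K = {k}. Then I({k} ⊥ A) = ∑_{i ∈ A} I({k} ⊥ {i}) - ∑_{B ⊆ A, |B| ≥ 2} δ(B ∪ {k}). -/
/-!
Writing `δ` for the Möbius inverse of `h` on the Boolean lattice, Möbius inversion gives
`h S = ∑_{B ⊆ S} δ B`, hence `h (A ∪ {k}) - h A = ∑_{B ⊆ A} δ (B ∪ {k})` for `k ∉ A`. Splitting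
off the terms with `|B| ≤ 1`, where `δ {k} = h {k}` and `δ {i, k} = -I({k} ⊥ {i})`, leaves exactly
the claimed identity.
-/

open Finset

namespace Finset

variable {α R : Type*} [DecidableEq α] [CommRing R]

def moebius (h : Finset α → R) (A : Finset α) : R :=
  ∑ B ∈ A.powerset, (-1) ^ (#A - #B) * h B

lemma sum_powerset_neg_one_pow_card' (s : Finset α) :
    ∑ t ∈ s.powerset, (-1 : R) ^ #t = if s = ∅ then 1 else 0 := by
  have := congrArg (Int.cast : ℤ → R) (sum_powerset_neg_one_pow_card (x := s))
  push_cast at this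
  simpa using this

lemma sum_Icc_neg_one_pow_card_sub {C S : Finset α} (hCS : C ⊆ S) :
    ∑ B ∈ Icc C S, (-1 : R) ^ (#B - #C) = if C = S then 1 else 0 := by
  have hdisj {D : Finset α} (hD : D ∈ (S \ C).powerset) : Disjoint C D :=
    (disjoint_of_subset_left (mem_powerset.1 hD) sdiff_disjoint).symm
  have hinj : Set.InjOn (C ∪ ·) (S \ C).powerset := fun D hD E hE hDE => by
    simpa [union_sdiff_left, (hdisj hD).symm.sdiff_eq_left, (hdisj hE).symm.sdiff_eq_left]
      using congrArg (· \ C) hDE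
  rw [Icc_eq_image_powerset hCS, sum_image hinj,
    sum_congr rfl fun D hD => by rw [card_union_of_disjoint (hdisj hD), Nat.add_sub_cancel_left],
    sum_powerset_neg_one_pow_card']
  exact if_congr (sdiff_eq_empty_iff_subset.trans ⟨hCS.antisymm, fun h => h ▸ subset_rfl⟩) rfl rfl

theorem sum_powerset_moebius (h : Finset α → R) (S : Finset α) :
    ∑ B ∈ S.powerset, moebius h B = h S := by
  calc ∑ B ∈ S.powerset, moebius h B
      = ∑ C ∈ S.powerset, (∑ B ∈ Icc C S, (-1 : R) ^ (#B - #C)) * h C := by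
        simp only [moebius, sum_mul]
        refine sum_comm' fun B C => ?_
        simp only [mem_powerset, mem_Icc]
        exact ⟨fun ⟨hBS, hCB⟩ => ⟨⟨hCB, hBS⟩, hCB.trans hBS⟩, fun ⟨⟨hCB, hBS⟩, _⟩ => ⟨hBS, hCB⟩⟩
    _ = h S := by
        rw [sum_eq_single_of_mem S (mem_powerset_self S) fun C hC hCS => by
          rw [sum_Icc_neg_one_pow_card_sub (mem_powerset.1 hC), if_neg hCS, zero_mul]]
        simp

lemma moebius_singleton (h : Finset α → R) (a : α) : moebius h {a} = h {a} - h ∅ := by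
  rw [moebius, ← insert_empty, sum_powerset_insert (notMem_empty a)]
  simp only [powerset_empty, insert_empty_eq, card_singleton, sum_singleton, card_empty, tsub_zero,
    pow_one, neg_mul, one_mul, one_le_card, insert_nonempty, Nat.sub_eq_zero_of_le, pow_zero]
  ring

lemma moebius_pair (h : Finset α → R) {a b : α} (hab : a ≠ b) :
    moebius h {a, b} = h {a, b} - h {a} - h {b} + h ∅ := by
  rw [moebius, sum_powerset_insert (notMem_singleton.2 hab), ← insert_empty,
    sum_powerset_insert (notMem_empty b), sum_powerset_insert (notMem_empty b)]
  simp only [powerset_empty, insert_empty_eq, mem_singleton, hab, not_false_eq_true,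
    card_insert_of_notMem, card_singleton, Nat.reduceAdd, sum_singleton, card_empty, tsub_zero,
    even_two, Even.neg_pow, one_pow, one_mul, Nat.add_one_sub_one, pow_one, neg_mul, tsub_self,
    pow_zero]
  ring

lemma sub_eq_sum_powerset_moebius_insert (h : Finset α → R) {a : α} {S : Finset α} (ha : a ∉ S) :
    h (insert a S) - h S = ∑ B ∈ S.powerset, moebius h (insert a B) := by
  rw [← sum_powerset_moebius h (insert a S), sum_powerset_insert ha, sum_powerset_moebius,
    add_sub_cancel_left]

lemma sum_powerset_eq_add_sum_singleton_add_sum_two_le {M : Type*} [AddCommMonoid M]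
    (f : Finset α → M) (S : Finset α) :
    ∑ B ∈ S.powerset, f B = f ∅ + ∑ i ∈ S, f {i} + ∑ B ∈ S.powerset with 2 ≤ #B, f B := by
  have hsmall :
      {B ∈ S.powerset | ¬ 2 ≤ #B} = insert ∅ (S.map ⟨singleton, singleton_injective⟩) := by
    ext B
    simp only [mem_filter, mem_powerset, mem_insert, mem_map, Function.Embedding.coeFn_mk, not_le,
      Nat.lt_succ_iff, Nat.le_one_iff_eq_zero_or_eq_one, card_eq_zero, card_eq_one]
    constructor
    · rintro ⟨hBS, rfl | ⟨i, rfl⟩⟩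
      · exact .inl rfl
      · exact .inr ⟨i, singleton_subset_iff.1 hBS, rfl⟩
    · rintro (rfl | ⟨i, hi, rfl⟩)
      · exact ⟨empty_subset _, .inl rfl⟩
      · exact ⟨singleton_subset_iff.2 hi, .inr ⟨i, rfl⟩⟩
  rw [← sum_filter_not_add_sum_filter S.powerset (fun B => 2 ≤ #B), hsmall,
    sum_insert (by simp), sum_map]
  rfl

end Finset

theorem stmt_8_general {α : Type*} [DecidableEq α] (P : Finset α)
    (h : Finset α → ℝ) (h0 : h ∅ = 0)
    (δ : Finset α → ℝ)
    (hδ : ∀ A : Finset α,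
      δ A = ∑ B ∈ A.powerset, (-1 : ℝ) ^ (A.card - B.card) * h B)
    (k : α) (A : Finset α) (hA : A ⊆ P.erase k) :
    h {k} + h A - h (insert k A)
      = (∑ i ∈ A, (h {k} + h {i} - h {i, k}))
        - ∑ B ∈ A.powerset.filter (fun B => 2 ≤ B.card), δ (B ∪ {k}) := by
  obtain rfl : δ = moebius h := funext hδ
  have hkA : k ∉ A := fun hkA => notMem_erase k P (hA hkA)
  have hpair : ∀ i ∈ A, moebius h {k, i} = -(h {k} + h {i} - h {i, k}) := fun i hi => by
    rw [moebius_pair h (ne_of_mem_of_not_mem hi hkA).symm, h0, pair_comm]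
    ring
  have hsplit := sub_eq_sum_powerset_moebius_insert h hkA
  rw [sum_powerset_eq_add_sum_singleton_add_sum_two_le, insert_empty, moebius_singleton, h0,
    sub_zero, sum_congr rfl hpair, sum_neg_distrib] at hsplit
  simp only [union_singleton]
  linarith

theorem stmt_8 {α : Type*} [DecidableEq α] (P : Finset α)
    (h : Finset α → ℝ) (h0 : h ∅ = 0)
    (δ : Finset α → ℝ)
    (hδ : ∀ A : Finset α,
      δ A = ∑ B ∈ A.powerset, (-1 : ℝ) ^ (A.card - B.card) * h B)
    (k : α) (hk : k ∈ P) (A : Finset α) (hA : A ⊆ P.erase k) :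
    h {k} + h A - h (insert k A)
      = (∑ i ∈ A, (h {k} + h {i} - h {i, k}))
        - ∑ B ∈ A.powerset.filter (fun B => 2 ≤ B.card), δ (B ∪ {k}) :=
  stmt_8_general P h h0 δ hδ k A hA
end

section
/- Invariance of the Gaussian synergy criterion under index permutation: for a 3×3 positive definite correlation matrix, |ρ12| < |ρ_{12|3}| holds if and only if |ρ13| < |ρ_{13|2}| holds, if and only if |ρ23| < |ρ_{23|1}| holds (where ρ_{ij|k} denotes the partial correlation of i and j given k). -/
open Real

noncomputable def corrMat (ρ12 ρ13 ρ23 : ℝ) : Matrix (Fin 3) (Fin 3) ℝ :=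
  !![1, ρ12, ρ13; ρ12, 1, ρ23; ρ13, ρ23, 1]

noncomputable def gaussEnt (ρ12 ρ13 ρ23 : ℝ) (A : Finset (Fin 3)) : ℝ :=
  (1 / 2) * Real.log
    (((corrMat ρ12 ρ13 ρ23).submatrix
        (fun i : A => (i : Fin 3)) (fun j : A => (j : Fin 3))).det)

noncomputable def delta123 (ρ12 ρ13 ρ23 : ℝ) : ℝ :=
  gaussEnt ρ12 ρ13 ρ23 {0, 1, 2}
    - gaussEnt ρ12 ρ13 ρ23 {0, 1} - gaussEnt ρ12 ρ13 ρ23 {0, 2}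
    - gaussEnt ρ12 ρ13 ρ23 {1, 2}
    + gaussEnt ρ12 ρ13 ρ23 {0} + gaussEnt ρ12 ρ13 ρ23 {1}
    + gaussEnt ρ12 ρ13 ρ23 {2}

noncomputable def partialCorr (ρ12 ρ13 ρ23 : ℝ) : ℝ :=
  (ρ12 - ρ13 * ρ23) / Real.sqrt ((1 - ρ13 ^ 2) * (1 - ρ23 ^ 2))

/-!
Squaring, `|ρij| < |ρ_{ij|k}|` becomes `ρij² (1 - ρik²)(1 - ρjk²) < (ρij - ρik ρjk)²`, which
rearranges to `det R < (1 - ρ12²)(1 - ρ13²)(1 - ρ23²)` for the correlation matrix `R`: a condition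
symmetric in the three indices (it says `δ123 < 0`). The denominators of the partial
correlations are positive because the `2 × 2` principal minors of the positive definite `R` are.
-/

lemma Matrix.PosDef.apply_mul_apply_lt {n : Type*} [Fintype n] {M : Matrix n n ℝ}
    (hM : M.PosDef) {i j : n} (hij : i ≠ j) : M i j * M j i < M i i * M j j := by
  have h := (hM.submatrix (e := ![i, j]) fun a b ↦ by
    fin_cases a <;> fin_cases b <;> simp [hij, hij.symm]).det_pos
  rw [Matrix.det_fin_two] at h
  simpa [sub_pos] using h

lemma abs_lt_abs_div_sqrt_iff {x y s : ℝ} (hs : 0 < s) :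
    |x| < |y / √s| ↔ x ^ 2 * s < y ^ 2 := by
  rw [← sq_lt_sq, div_pow, sq_sqrt hs.le, lt_div_iff₀ hs]

lemma det_corrMat (a b c : ℝ) :
    (corrMat a b c).det = 1 - a ^ 2 - b ^ 2 - c ^ 2 + 2 * a * b * c := by
  simp [corrMat, Matrix.det_fin_three]
  ring

lemma abs_lt_abs_partialCorr_iff {a b c : ℝ} (hb : 0 < 1 - b ^ 2) (hc : 0 < 1 - c ^ 2) :
    |a| < |partialCorr a b c| ↔ (corrMat a b c).det < (1 - a ^ 2) * (1 - b ^ 2) * (1 - c ^ 2) := by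
  rw [partialCorr, abs_lt_abs_div_sqrt_iff (mul_pos hb hc), det_corrMat]
  constructor <;> intro h <;> linarith

lemma one_sub_sq_pos_of_corrMat_posDef {a b c : ℝ} (h : (corrMat a b c).PosDef) :
    0 < 1 - a ^ 2 ∧ 0 < 1 - b ^ 2 ∧ 0 < 1 - c ^ 2 := by
  refine ⟨?_, ?_, ?_⟩ <;> rw [sub_pos, sq]
  · simpa [corrMat] using h.apply_mul_apply_lt (i := 0) (j := 1) (by decide)
  · simpa [corrMat] using h.apply_mul_apply_lt (i := 0) (j := 2) (by decide)
  · simpa [corrMat] using h.apply_mul_apply_lt (i := 1) (j := 2) (by decide)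

theorem stmt_13 (ρ12 ρ13 ρ23 : ℝ) (hpd : (corrMat ρ12 ρ13 ρ23).PosDef) :
    (|ρ12| < |partialCorr ρ12 ρ13 ρ23| ↔ |ρ13| < |partialCorr ρ13 ρ12 ρ23|)
      ∧ (|ρ13| < |partialCorr ρ13 ρ12 ρ23| ↔ |ρ23| < |partialCorr ρ23 ρ12 ρ13|) := by
  obtain ⟨h12, h13, h23⟩ := one_sub_sq_pos_of_corrMat_posDef hpd
  rw [abs_lt_abs_partialCorr_iff h13 h23, abs_lt_abs_partialCorr_iff h12 h23,
    abs_lt_abs_partialCorr_iff h12 h13, det_corrMat, det_corrMat, det_corrMat]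
  constructor <;> constructor <;> intro h <;> linarith
end
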